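/- If a finite simple graph G on n vertices admits an acyclic 4-coloring, then there exists a partition (A_1, A_2, A_3) of V(G) such that the induced subgraphs G[A_1] and G[A_2] are forests with |A_1| ≥ ⌊2(n+1)/5⌋ and |A_2| ≥ ⌊2(n+1)/5⌋, and A_3 is an independent set in G. (In particular this applies to every planar graph with no cycle of length 4 or 5, since such graphs admit acyclic 4-colorings.) -/
import Mathlib


open SimpleGraph

/-- An acyclic `k`-coloring of `G`: a partition of the vertex set into `k` independent sets
such that the union of any two color classes induces a forest. -/
def IsAcyclicColoring {V : Type*} (G : SimpleGraph V) (k : ℕ) (A : Fin k → Set V) : Prop :=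
  (∀ i j, i ≠ j → Disjoint (A i) (A j)) ∧
  (⋃ i, A i) = Set.univ ∧
  (∀ i, ∀ u ∈ A i, ∀ v ∈ A i, ¬ G.Adj u v) ∧
  (∀ i j, i ≠ j → (G.induce (A i ∪ A j)).IsAcyclic)

lemma isAcyclic_induce_mono {V : Type*} (G : SimpleGraph V) {s t : Set V} (h : t ⊆ s)
    (hs : (G.induce s).IsAcyclic) : (G.induce t).IsAcyclic := by
  intro v c hc
  exact hs (c.map (G.induceHomOfLE h).toHom) (hc.map (G.induceHomOfLE h).injective)

theorem aux_two_large_forests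
    {V : Type*} [Fintype V] [DecidableEq V] (G : SimpleGraph V)
    (n : ℕ) (hn : Fintype.card V = n)
    (hcol : ∃ A : Fin 4 → Set V, (∀ i j, i ≠ j → Disjoint (A i) (A j)) ∧
      (⋃ i, A i) = Set.univ ∧
      (∀ i, ∀ u ∈ A i, ∀ v ∈ A i, ¬ G.Adj u v) ∧
      (∀ i j, i ≠ j → (G.induce (A i ∪ A j)).IsAcyclic)) :
    ∃ A₁ A₂ A₃ : Finset V,
      Disjoint A₁ A₂ ∧ Disjoint A₁ A₃ ∧ Disjoint A₂ A₃ ∧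
      A₁ ∪ A₂ ∪ A₃ = Finset.univ ∧
      (G.induce (A₁ : Set V)).IsAcyclic ∧ (G.induce (A₂ : Set V)).IsAcyclic ∧
      2 * (n + 1) / 5 ≤ A₁.card ∧ 2 * (n + 1) / 5 ≤ A₂.card ∧
      (∀ u ∈ A₃, ∀ v ∈ A₃, ¬ G.Adj u v) := by
  classical
  obtain ⟨A, hdisj, hcover, hindep, hforest⟩ := hcol
  set B : Fin 4 → Finset V := fun i => Finset.univ.filter (fun v => v ∈ A i) with hBdef
  have hBmem : ∀ i v, v ∈ B i ↔ v ∈ A i := by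
    intro i v; simp [hBdef]
  have hBd : ∀ i j, i ≠ j → Disjoint (B i) (B j) := by
    intro i j hij
    rw [Finset.disjoint_left]
    intro v hvi hvj
    exact (hdisj i j hij).le_bot ⟨(hBmem i v).1 hvi, (hBmem j v).1 hvj⟩
  have hBcov : ∀ v : V, ∃ i, v ∈ B i := by
    intro v
    have : v ∈ ⋃ i, A i := hcover ▸ Set.mem_univ v
    obtain ⟨i, hi⟩ := Set.mem_iUnion.1 this
    exact ⟨i, (hBmem i v).2 hi⟩
  have hBsub : ∀ i, (B i : Set V) ⊆ A i := by
    intro i v hv; exact (hBmem i v).1 hv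
  -- sum of cards
  have huniv : Finset.univ.biUnion B = (Finset.univ : Finset V) := by
    apply Finset.eq_univ_iff_forall.2
    intro v
    obtain ⟨i, hi⟩ := hBcov v
    exact Finset.mem_biUnion.2 ⟨i, Finset.mem_univ i, hi⟩
  have hsum : ∑ i, (B i).card = n := by
    rw [← Finset.card_biUnion (fun i _ j _ hij => hBd i j hij), huniv, Finset.card_univ, hn]
  -- pick max p, min q
  obtain ⟨p, -, hp⟩ := Finset.exists_max_image Finset.univ (fun i => (B i).card)
    ⟨0, Finset.mem_univ 0⟩
  have herase_ne : (Finset.univ.erase p).Nonempty := by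
    apply Finset.card_pos.1
    rw [Finset.card_erase_of_mem (Finset.mem_univ p), Finset.card_univ]
    simp
  obtain ⟨q, hq_mem, hq⟩ := Finset.exists_min_image (Finset.univ.erase p)
    (fun i => (B i).card) herase_ne
  have hqp : q ≠ p := (Finset.mem_erase.1 hq_mem).1
  -- the other two indices
  have hr2 : ((Finset.univ : Finset (Fin 4)) \ {p, q}).card = 2 := by
    rw [Finset.card_sdiff_of_subset (Finset.subset_univ _)]
    rw [Finset.card_univ, Finset.card_insert_of_notMem (by simp [Ne.symm hqp]),
      Finset.card_singleton]
    simp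
  obtain ⟨x, y, hxy, hr⟩ := Finset.card_eq_two.1 hr2
  have hx : x ∈ (Finset.univ : Finset (Fin 4)) \ {p, q} := by rw [hr]; simp
  have hy : y ∈ (Finset.univ : Finset (Fin 4)) \ {p, q} := by rw [hr]; simp
  simp only [Finset.mem_sdiff, Finset.mem_univ, Finset.mem_insert, Finset.mem_singleton,
    true_and, not_or] at hx hy
  obtain ⟨hxp', hxq'⟩ := hx
  obtain ⟨hyp', hyq'⟩ := hy
  have hxp : x ≠ p := hxp'
  have hxq : x ≠ q := hxq'
  have hyp : y ≠ p := hyp'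
  have hyq : y ≠ q := hyq'
  have hpx : p ≠ x := hxp.symm
  have hpy : p ≠ y := hyp.symm
  have hqx : q ≠ x := hxq.symm
  have hqy : q ≠ y := hyq.symm
  have hunivFin : (Finset.univ : Finset (Fin 4)) = {p, q, x, y} := by
    symm
    apply Finset.eq_univ_iff_forall.2
    intro i
    by_cases hip : i = p
    · simp [hip]
    · by_cases hiq : i = q
      · simp [hiq]
      · have : i ∈ (Finset.univ : Finset (Fin 4)) \ {p, q} := by
          simp [Finset.mem_sdiff, hip, hiq]
        rw [hr] at this
        simp only [Finset.mem_insert, Finset.mem_singleton] at this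
        rcases this with h | h <;> simp [h]
  set a := (B p).card
  set b := (B x).card
  set c := (B y).card
  set d := (B q).card
  set m := 2 * (n + 1) / 5 with hmdef
  have hm5 : 5 * m ≤ 2 * (n + 1) := by
    rw [hmdef, mul_comm]; exact Nat.div_mul_le_self _ _
  have hsum4 : a + b + c + d = n := by
    rw [← hsum, hunivFin]
    rw [Finset.sum_insert (by simp [Ne.symm hqp, hpx, hpy]),
      Finset.sum_insert (by simp [hqx, hqy]),
      Finset.sum_insert (by simp [hxy]), Finset.sum_singleton]
    ring
  have hba : b ≤ a := hp x (Finset.mem_univ x)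
  have hca : c ≤ a := hp y (Finset.mem_univ y)
  have hda : d ≤ a := hp q (Finset.mem_univ q)
  have hdb : d ≤ b := hq x (by simp [Finset.mem_erase, hxp])
  have hdc : d ≤ c := hq y (by simp [Finset.mem_erase, hyp])
  by_cases hcase : 2 * m ≤ a + b + c
  · -- split B p
    have hsle : m - b ≤ a := by omega
    obtain ⟨S, hSsub, hScard⟩ := Finset.exists_subset_card_eq hsle
    refine ⟨S ∪ B x, (B p \ S) ∪ B y, B q, ?_, ?_, ?_, ?_, ?_, ?_, ?_, ?_, ?_⟩
    · refine Finset.disjoint_union_left.2 ⟨Finset.disjoint_union_right.2 ⟨?_, ?_⟩,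
        Finset.disjoint_union_right.2 ⟨?_, ?_⟩⟩
      · exact Finset.disjoint_sdiff
      · exact Finset.disjoint_of_subset_left hSsub (hBd p y hpy)
      · exact Finset.disjoint_of_subset_right Finset.sdiff_subset (hBd x p hxp)
      · exact hBd x y hxy
    · simp only [Finset.disjoint_union_left]
      exact ⟨Finset.disjoint_of_subset_left hSsub (hBd p q hqp.symm), hBd x q hxq⟩
    · simp only [Finset.disjoint_union_left]
      exact ⟨Finset.disjoint_of_subset_left Finset.sdiff_subset (hBd p q hqp.symm), hBd y q hyq⟩
    · apply Finset.eq_univ_iff_forall.2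
      intro v
      obtain ⟨i, hi⟩ := hBcov v
      have : i ∈ ({p, q, x, y} : Finset (Fin 4)) := hunivFin ▸ Finset.mem_univ i
      simp only [Finset.mem_insert, Finset.mem_singleton] at this
      simp only [Finset.mem_union, Finset.mem_sdiff]
      rcases this with h | h | h | h <;> subst h
      · by_cases hvS : v ∈ S
        · tauto
        · tauto
      · tauto
      · tauto
      · tauto
    · apply isAcyclic_induce_mono G ?_ (hforest p x hpx)
      intro v hv
      simp only [Finset.coe_union, Set.mem_union] at hv
      rcases hv with h | h
      · exact Or.inl (hBsub p (hSsub h))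
      · exact Or.inr (hBsub x h)
    · apply isAcyclic_induce_mono G ?_ (hforest p y hpy)
      intro v hv
      simp only [Finset.coe_union, Set.mem_union] at hv
      rcases hv with h | h
      · exact Or.inl (hBsub p (Finset.sdiff_subset h))
      · exact Or.inr (hBsub y h)
    · rw [Finset.card_union_of_disjoint (Finset.disjoint_of_subset_left hSsub (hBd p x hpx)), hScard]
      omega
    · rw [Finset.card_union_of_disjoint (Finset.disjoint_of_subset_left Finset.sdiff_subset (hBd p y hpy)),
        Finset.card_sdiff_of_subset hSsub, hScard]
      omega
    · intro u hu v hv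
      exact hindep q u ((hBmem q u).1 hu) v ((hBmem q v).1 hv)
  · -- pair up
    refine ⟨B p ∪ B q, B x ∪ B y, ∅, ?_, Finset.disjoint_empty_right _,
      Finset.disjoint_empty_right _, ?_, ?_, ?_, ?_, ?_, by simp⟩
    · simp only [Finset.disjoint_union_left, Finset.disjoint_union_right]
      exact ⟨⟨hBd p x hpx, hBd q x hqx⟩, ⟨hBd p y hpy, hBd q y hqy⟩⟩
    · rw [Finset.union_empty]
      apply Finset.eq_univ_iff_forall.2
      intro v
      obtain ⟨i, hi⟩ := hBcov v
      have : i ∈ ({p, q, x, y} : Finset (Fin 4)) := hunivFin ▸ Finset.mem_univ i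
      simp only [Finset.mem_insert, Finset.mem_singleton] at this
      simp only [Finset.mem_union]
      rcases this with h | h | h | h <;> subst h <;> tauto
    · apply isAcyclic_induce_mono G ?_ (hforest p q hqp.symm)
      intro v hv
      simp only [Finset.coe_union, Set.mem_union] at hv
      rcases hv with h | h
      · exact Or.inl (hBsub p h)
      · exact Or.inr (hBsub q h)
    · apply isAcyclic_induce_mono G ?_ (hforest x y hxy)
      intro v hv
      simp only [Finset.coe_union, Set.mem_union] at hv
      rcases hv with h | h
      · exact Or.inl (hBsub x h)
      · exact Or.inr (hBsub y h)
    · rw [Finset.card_union_of_disjoint (hBd p q hqp.symm)]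
      omega
    · rw [Finset.card_union_of_disjoint (hBd x y hxy)]
      omega

theorem two_large_forests_and_independent_set_from_acyclic_four_coloring
    {V : Type*} [Fintype V] [DecidableEq V] (G : SimpleGraph V)
    (n : ℕ) (hn : Fintype.card V = n)
    (hcol : ∃ A : Fin 4 → Set V, IsAcyclicColoring G 4 A) :
    ∃ A₁ A₂ A₃ : Finset V,
      Disjoint A₁ A₂ ∧ Disjoint A₁ A₃ ∧ Disjoint A₂ A₃ ∧
      A₁ ∪ A₂ ∪ A₃ = Finset.univ ∧
      (G.induce (A₁ : Set V)).IsAcyclic ∧ (G.induce (A₂ : Set V)).IsAcyclic ∧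
      2 * (n + 1) / 5 ≤ A₁.card ∧ 2 * (n + 1) / 5 ≤ A₂.card ∧
      (∀ u ∈ A₃, ∀ v ∈ A₃, ¬ G.Adj u v) := by
  apply aux_two_large_forests G n hn
  obtain ⟨A, hA⟩ := hcol
  exact ⟨A, hA⟩
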